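/- Let C be a finite set with N = |C| elements and let T be a set of N permutations of C such that for every c ∈ C the evaluation map T → C, t ↦ t(c), is a bijection. Let w₁, w₂ : C → ℝ be nonnegative functions with Σ_{c∈C} w₁(c) w₂(c) > 0, set Z₁ = Σ_c w₁(c), Z₂ = Σ_c w₂(c) and ΔZ = Σ_c w₁(c) w₂(c). Let t_1, …, t_M be independent random permutations, each uniformly distributed on T, let s ∈ {1,…,M}, and define ΔZ^j = Σ_{c∈C} w₁(t_j⁻¹(c)) · w₂(t_s⁻¹(c)) for each j. Then ΔZ^s = ΔZ almost surely, and the decoding error probability satisfies P( max_{j≠s} ΔZ^j ≥ ΔZ^s ) ≤ (M−1) · Z₁ Z₂ / (N · ΔZ). -/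

import Mathlib

/-!
Union bound over the `M - 1` competitors, then Markov's inequality for each. Since every
evaluation `t ↦ t x` is a bijection `T → C`, so is `t ↦ t⁻¹ c`; hence for `j ≠ s`, where `f j`
and `f s` are independent and uniform on `T`, the competing score `ΔZ^j` has mean `Z₁ Z₂ / N`,
whereas the sent score is always `ΔZ`.
-/

open Finset
open scoped Classical

theorem prod_univ_eq_mul_mul_pow {ι M : Type*} [Fintype ι] [DecidableEq ι] [CommMonoid M]
    {i j : ι} (hij : i ≠ j) (G : ι → M) (n : M) (hG : ∀ k, k ≠ i → k ≠ j → G k = n) :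
    ∏ k, G k = G i * G j * n ^ (Fintype.card ι - 2) := by
  have hj : j ∈ univ.erase i := mem_erase.2 ⟨hij.symm, mem_univ j⟩
  rw [← mul_prod_erase univ G (mem_univ i), ← mul_prod_erase _ G hj,
    prod_congr rfl fun k hk => hG k (mem_erase.1 (mem_erase.1 hk).2).1 (mem_erase.1 hk).1,
    prod_const, card_erase_of_mem hj, card_erase_of_mem (mem_univ i), card_univ, mul_assoc,
    Nat.sub_sub]

theorem sum_piFinset_apply_mul_apply {ι α R : Type*} [Fintype ι] [DecidableEq ι]
    [CommSemiring R] (T : Finset α) {i j : ι} (hij : i ≠ j) (g h : α → R) :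
    ∑ f ∈ Fintype.piFinset (fun _ : ι => T), g (f i) * h (f j) =
      (∑ t ∈ T, g t) * (∑ t ∈ T, h t) * (#T : R) ^ (Fintype.card ι - 2) := by
  let F : ι → α → R := fun k x => if k = i then g x else if k = j then h x else 1
  calc ∑ f ∈ Fintype.piFinset (fun _ : ι => T), g (f i) * h (f j)
      = ∑ f ∈ Fintype.piFinset (fun _ : ι => T), ∏ k, F k (f k) := by
        refine sum_congr rfl fun f _ => ?_
        rw [prod_univ_eq_mul_mul_pow hij _ 1 fun k hki hkj => by simp [F, hki, hkj]]
        simp [F, hij.symm]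
    _ = ∏ k, ∑ t ∈ T, F k t := sum_prod_piFinset T F
    _ = _ := by
        rw [prod_univ_eq_mul_mul_pow hij _ (#T : R) fun k hki hkj => by simp [F, hki, hkj]]
        simp [F, hij.symm]

theorem sum_perm_inv_apply_eq_sum {C R : Type*} [Fintype C] [AddCommMonoid R]
    {T : Finset (Equiv.Perm C)}
    (hbij : ∀ c : C, Set.BijOn (fun t : Equiv.Perm C => t c) ↑T Set.univ) (w : C → R) (c : C) :
    ∑ t ∈ T, w (t⁻¹ c) = ∑ x, w x := by
  refine sum_nbij (fun t => t⁻¹ c) (fun _ _ => mem_univ _) ?_ ?_ fun _ _ => rfl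
  · intro t₁ h₁ t₂ h₂ h
    refine (hbij (t₁⁻¹ c)).injOn h₁ h₂ ?_
    calc t₁ (t₁⁻¹ c) = c := by simp
      _ = t₂ (t₁⁻¹ c) := by rw [show t₁⁻¹ c = t₂⁻¹ c from h]; simp
  · intro x _
    obtain ⟨t, ht, htx⟩ := (hbij x).surjOn (Set.mem_univ c)
    exact ⟨t, ht, by simp [← htx]⟩

theorem card_filter_le_nsmul_le_sum {α R : Type*} [AddCommMonoid R] [PartialOrder R]
    [IsOrderedAddMonoid R] (s : Finset α) (X : α → R) (hX : ∀ x ∈ s, 0 ≤ X x) (a : R)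
    [DecidablePred fun x => a ≤ X x] :
    #(s.filter fun x => a ≤ X x) • a ≤ ∑ x ∈ s, X x :=
  (card_nsmul_le_sum _ X a fun _ hx => (mem_filter.1 hx).2).trans
    (sum_le_sum_of_subset_of_nonneg (filter_subset _ s) fun x hx _ => hX x hx)

theorem card_filter_le_sum_card_filter {α ι : Type*} [DecidableEq α] (s : Finset α)
    (t : Finset ι) (q : α → Prop) (p : ι → α → Prop) [DecidablePred q]
    [∀ j, DecidablePred (p j)] (hq : ∀ x ∈ s, q x → ∃ j ∈ t, p j x) :
    #(s.filter q) ≤ ∑ j ∈ t, #(s.filter (p j)) := by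
  refine (card_le_card fun x hx => ?_).trans card_biUnion_le
  obtain ⟨hxs, hqx⟩ := mem_filter.1 hx
  obtain ⟨j, hj, hpx⟩ := hq x hxs hqx
  exact mem_biUnion.2 ⟨j, hj, mem_filter.2 ⟨hxs, hpx⟩⟩

section CrossScore

variable {C R : Type*} [Fintype C]

/-- The paper's score `ΔZ^j` of message `j` when `s` was sent is `crossScore w₁ w₂ t_j t_s`. -/
def crossScore [CommSemiring R] (w₁ w₂ : C → R) (σ τ : Equiv.Perm C) : R :=
  ∑ c, w₁ (σ⁻¹ c) * w₂ (τ⁻¹ c)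

theorem crossScore_self [CommSemiring R] (w₁ w₂ : C → R) (σ : Equiv.Perm C) :
    crossScore w₁ w₂ σ σ = ∑ c, w₁ c * w₂ c :=
  Equiv.sum_comp σ⁻¹ fun c => w₁ c * w₂ c

variable {ι : Type*} [Fintype ι] [DecidableEq ι] {T : Finset (Equiv.Perm C)}

theorem sum_piFinset_crossScore [CommSemiring R] (hcard : #T = Fintype.card C)
    (hbij : ∀ c : C, Set.BijOn (fun t : Equiv.Perm C => t c) ↑T Set.univ)
    (w₁ w₂ : C → R) {i j : ι} (hij : i ≠ j) :
    ∑ f ∈ Fintype.piFinset (fun _ : ι => T), crossScore w₁ w₂ (f i) (f j) =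
      (#T : R) ^ (Fintype.card ι - 1) * ((∑ c, w₁ c) * ∑ c, w₂ c) := by
  have hpair (c : C) :
      ∑ f ∈ Fintype.piFinset (fun _ : ι => T), w₁ ((f i)⁻¹ c) * w₂ ((f j)⁻¹ c) =
        (∑ c, w₁ c) * (∑ c, w₂ c) * (#T : R) ^ (Fintype.card ι - 2) := by
    rw [sum_piFinset_apply_mul_apply T hij (fun t => w₁ (t⁻¹ c)) (fun t => w₂ (t⁻¹ c)),
      sum_perm_inv_apply_eq_sum hbij, sum_perm_inv_apply_eq_sum hbij]
  simp only [crossScore]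
  rw [sum_comm]
  simp only [hpair, sum_const, card_univ, ← hcard, nsmul_eq_mul]
  obtain ⟨k, hk⟩ := Nat.exists_eq_add_of_lt (Fintype.one_lt_card_iff.2 ⟨i, j, hij⟩)
  simp only [hk, show 1 + k + 1 - 2 = k by omega, show 1 + k + 1 - 1 = k + 1 by omega, pow_succ]
  ring

theorem card_filter_le_crossScore_mul_le [CommSemiring R] [PartialOrder R] [IsOrderedRing R]
    (hcard : #T = Fintype.card C)
    (hbij : ∀ c : C, Set.BijOn (fun t : Equiv.Perm C => t c) ↑T Set.univ)
    {w₁ w₂ : C → R} (hw₁ : ∀ c, 0 ≤ w₁ c) (hw₂ : ∀ c, 0 ≤ w₂ c) {i j : ι} (hij : i ≠ j)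
    (a : R) :
    (#((Fintype.piFinset fun _ : ι => T).filter fun f => a ≤ crossScore w₁ w₂ (f i) (f j)) : R)
        * a ≤ (#T : R) ^ (Fintype.card ι - 1) * ((∑ c, w₁ c) * ∑ c, w₂ c) := by
  rw [← nsmul_eq_mul, ← sum_piFinset_crossScore hcard hbij w₁ w₂ hij]
  exact card_filter_le_nsmul_le_sum _ _
    (fun f _ => sum_nonneg fun c _ => mul_nonneg (hw₁ _) (hw₂ _)) a

theorem card_filter_mul_le_of_imp_exists_crossScore_ge [CommSemiring R] [PartialOrder R]
    [IsOrderedRing R] (hcard : #T = Fintype.card C)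
    (hbij : ∀ c : C, Set.BijOn (fun t : Equiv.Perm C => t c) ↑T Set.univ)
    {w₁ w₂ : C → R} (hw₁ : ∀ c, 0 ≤ w₁ c) (hw₂ : ∀ c, 0 ≤ w₂ c) (s : ι)
    (q : (ι → Equiv.Perm C) → Prop) [DecidablePred q]
    (hq : ∀ f, q f → ∃ j ≠ s, ∑ c, w₁ c * w₂ c ≤ crossScore w₁ w₂ (f j) (f s)) :
    (#((Fintype.piFinset fun _ : ι => T).filter q) : R) * ∑ c, w₁ c * w₂ c
      ≤ (Fintype.card ι - 1 : ℕ) *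
        ((#T : R) ^ (Fintype.card ι - 1) * ((∑ c, w₁ c) * ∑ c, w₂ c)) := by
  set ΔZ := ∑ c, w₁ c * w₂ c
  have hΔ : 0 ≤ ΔZ := sum_nonneg fun c _ => mul_nonneg (hw₁ c) (hw₂ c)
  calc _ ≤ (∑ j ∈ univ.erase s, (#((Fintype.piFinset fun _ : ι => T).filter
          fun f => ΔZ ≤ crossScore w₁ w₂ (f j) (f s)) : R)) * ΔZ := by
        refine mul_le_mul_of_nonneg_right ?_ hΔ
        rw [← Nat.cast_sum]
        refine Nat.mono_cast <| card_filter_le_sum_card_filter _ _ _ _ fun f _ hf => ?_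
        obtain ⟨j, hjs, hle⟩ := hq f hf
        exact ⟨j, mem_erase.2 ⟨hjs, mem_univ j⟩, hle⟩
    _ ≤ ∑ _j ∈ univ.erase s, (#T : R) ^ (Fintype.card ι - 1) * ((∑ c, w₁ c) * ∑ c, w₂ c) := by
        rw [sum_mul]
        exact sum_le_sum fun j hj =>
          card_filter_le_crossScore_mul_le hcard hbij hw₁ hw₂ (mem_erase.1 hj).1 ΔZ
    _ = _ := by rw [sum_const, card_erase_of_mem (mem_univ s), card_univ, nsmul_eq_mul]

end CrossScore

/-- Decoding error bound for approximation set coding (conditional on the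
data). With `T` a transformation set of `N = |C|` permutations, nonnegative weights
`w₁, w₂` with joint partition function `ΔZ = Σ_c w₁(c)w₂(c) > 0`, and `M` independent
uniform transformations `t_1,…,t_M` (modelled as the uniform distribution on tuples
`f ∈ T^M`), the score of the sent message satisfies `ΔZ^s = ΔZ` always, and the
probability that some competing score `ΔZ^j`, `j ≠ s`, reaches `ΔZ^s` is at most
`(M−1)·Z₁Z₂/(N·ΔZ)`. -/
theorem stmt_7 {C : Type*} [Fintype C] (T : Finset (Equiv.Perm C))
    (hcard : T.card = Fintype.card C)
    (hbij : ∀ c : C, Set.BijOn (fun t : Equiv.Perm C => t c) ↑T Set.univ)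
    (w₁ w₂ : C → ℝ) (hw₁ : ∀ c, 0 ≤ w₁ c) (hw₂ : ∀ c, 0 ≤ w₂ c)
    (hΔ : 0 < ∑ c : C, w₁ c * w₂ c)
    (M : ℕ) (s : Fin M) :
    (∀ f ∈ Fintype.piFinset (fun _ : Fin M => T),
        ∑ c : C, w₁ ((f s)⁻¹ c) * w₂ ((f s)⁻¹ c) = ∑ c : C, w₁ c * w₂ c) ∧
    (((Fintype.piFinset (fun _ : Fin M => T)).filter
          (fun f => ∃ j, j ≠ s ∧
            (∑ c : C, w₁ ((f s)⁻¹ c) * w₂ ((f s)⁻¹ c)) ≤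
              ∑ c : C, w₁ ((f j)⁻¹ c) * w₂ ((f s)⁻¹ c))).card / (T.card ^ M : ℝ) ≤
      ((M : ℝ) - 1) * (∑ c : C, w₁ c) * (∑ c : C, w₂ c) /
        ((Fintype.card C : ℝ) * ∑ c : C, w₁ c * w₂ c)) := by
  refine ⟨fun f _ => crossScore_self w₁ w₂ (f s), ?_⟩
  have hT : (0 : ℝ) < #T := Nat.cast_pos.2 <| hcard ▸ Fintype.card_pos_iff.2
    ⟨(exists_ne_zero_of_sum_ne_zero hΔ.ne').choose⟩
  rw [← hcard, div_le_div_iff₀ (pow_pos hT M) (mul_pos hT hΔ)]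
  calc _ = _ * (∑ c, w₁ c * w₂ c) * (#T : ℝ) := by ring
    _ ≤ ((M : ℝ) - 1) * ((#T : ℝ) ^ (M - 1) * ((∑ c, w₁ c) * ∑ c, w₂ c)) * #T := by
      gcongr ?_ * _
      refine (card_filter_mul_le_of_imp_exists_crossScore_ge hcard hbij hw₁ hw₂ s _
        fun f ⟨j, hjs, hle⟩ =>
          ⟨j, hjs, (crossScore_self w₁ w₂ (f s)).symm.trans_le hle⟩).trans_eq ?_
      rw [Fintype.card_fin, Nat.cast_pred s.pos]
    _ = _ := by rw [← pow_sub_one_mul s.pos.ne' (#T : ℝ)]; ring
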